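/- Combining the two previous optimizations: for g ∈ ℂ and Γ > 0, the supremum over v > 0 and u ∈ ℂ of log₂ v − v·(|1 − ū g|² + |u|² Γ) + c equals log₂(1 + |g|²/Γ), where c = log₂ e − log₂(log₂ e). -/

import Mathlib

open Real

lemma norm_sq_complex (z : ℂ) : ‖z‖^2 = z.re^2 + z.im^2 := by
  rw [Complex.sq_norm, Complex.normSq_apply]; ring

/-- sup over v > 0 and u ∈ ℂ of log₂ v − v·(|1 − ū g|² + |u|² Γ) + c equals
log₂(1 + |g|²/Γ) (and the supremum is attained), where c = log₂ e − log₂(log₂ e). -/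
theorem stmt_3 (g : ℂ) (Γ : ℝ) (hΓ : 0 < Γ) :
    IsGreatest
      {x : ℝ | ∃ v : ℝ, 0 < v ∧ ∃ u : ℂ,
        x = logb 2 v - v * (‖1 - (starRingEnd ℂ) u * g‖ ^ 2 + ‖u‖ ^ 2 * Γ) +
          (logb 2 (Real.exp 1) - logb 2 (logb 2 (Real.exp 1)))}
      (logb 2 (1 + ‖g‖ ^ 2 / Γ)) := by
  have hL : 0 < Real.log 2 := Real.log_pos (by norm_num)
  have hA : 0 < ‖g‖ ^ 2 + Γ := by positivity
  set A : ℝ := ‖g‖ ^ 2 + Γ with hAdef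
  have htarget : logb 2 (1 + ‖g‖ ^ 2 / Γ) = (Real.log A - Real.log Γ) / Real.log 2 := by
    rw [show (1 : ℝ) + ‖g‖ ^ 2 / Γ = A / Γ by
        field_simp; rw [hAdef]; ring,
      logb, Real.log_div (ne_of_gt hA) (ne_of_gt hΓ)]
  have hc : logb 2 (Real.exp 1) - logb 2 (logb 2 (Real.exp 1))
      = (1 + Real.log (Real.log 2)) / Real.log 2 := by
    rw [logb, logb, Real.log_exp, Real.log_div one_ne_zero (ne_of_gt hL), Real.log_one]
    field_simp
    ring
  -- the key quadratic bound
  have hq_ge : ∀ u : ℂ, Γ / A ≤ ‖1 - (starRingEnd ℂ) u * g‖ ^ 2 + ‖u‖ ^ 2 * Γ := by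
    intro u
    rw [div_le_iff₀ hA]
    have h1 : ‖1 - (starRingEnd ℂ) u * g‖ ^ 2
        = (1 - (u.re * g.re + u.im * g.im))^2 + (u.re * g.im - u.im * g.re)^2 := by
      rw [norm_sq_complex]
      simp [Complex.sub_re, Complex.sub_im, Complex.mul_re, Complex.mul_im]
      ring
    rw [h1, norm_sq_complex u, hAdef, norm_sq_complex g]
    nlinarith [sq_nonneg ((g.re^2 + g.im^2 + Γ) * u.re - g.re),
      sq_nonneg ((g.re^2 + g.im^2 + Γ) * u.im - g.im), sq_nonneg (u.re * g.im - u.im * g.re),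
      mul_pos hΓ hΓ, sq_nonneg u.re, sq_nonneg u.im]
  constructor
  · refine ⟨A / (Γ * Real.log 2), by positivity, (g / (A : ℂ)), ?_⟩
    have hq : ‖1 - (starRingEnd ℂ) (g / (A:ℂ)) * g‖ ^ 2 + ‖(g / (A:ℂ))‖ ^ 2 * Γ = Γ / A := by
      have h1 : (1 : ℂ) - (starRingEnd ℂ) (g / (A:ℂ)) * g = ((Γ / A : ℝ) : ℂ) := by
        rw [map_div₀, Complex.conj_ofReal, div_mul_eq_mul_div,
          Complex.conj_mul', ← Complex.ofReal_pow]
        rw [show ((‖g‖^2 : ℝ) : ℂ) / ((A:ℝ):ℂ) = (((‖g‖^2 / A : ℝ)) : ℂ) by push_cast; ring]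
        rw [← Complex.ofReal_one, ← Complex.ofReal_sub]
        congr 1
        field_simp
        rw [hAdef]; ring
      have h2 : ‖(g/(A:ℂ))‖^2 = ‖g‖^2 / A^2 := by
        rw [norm_div, Complex.norm_real, Real.norm_eq_abs, abs_of_pos hA, div_pow]
      rw [h1, h2, Complex.norm_real, Real.norm_eq_abs,
        abs_of_pos (by positivity : (0:ℝ) < Γ / A)]
      rw [div_pow, hAdef]
      field_simp
      ring
    rw [hq, htarget, hc, logb]
    rw [show A / (Γ * Real.log 2) * (Γ / A) = 1 / Real.log 2 by field_simp]
    rw [Real.log_div (ne_of_gt hA) (by positivity), Real.log_mul (ne_of_gt hΓ) (ne_of_gt hL)]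
    field_simp
    ring
  · rintro x ⟨v, hv, u, rfl⟩
    set q : ℝ := ‖1 - (starRingEnd ℂ) u * g‖ ^ 2 + ‖u‖ ^ 2 * Γ with hqdef
    have hq0 : 0 < q := lt_of_lt_of_le (by positivity) (hq_ge u)
    have key : Real.log (v * q * Real.log 2) ≤ v * q * Real.log 2 - 1 :=
      Real.log_le_sub_one_of_pos (by positivity)
    rw [Real.log_mul (by positivity) (ne_of_gt hL), Real.log_mul (ne_of_gt hv) (ne_of_gt hq0)]
      at key
    have hlogq : Real.log Γ - Real.log A ≤ Real.log q := by
      have := Real.log_le_log (by positivity : (0:ℝ) < Γ / A) (hq_ge u)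
      rwa [Real.log_div (ne_of_gt hΓ) (ne_of_gt hA)] at this
    rw [htarget, hc, logb]
    have hfin : Real.log v - v * q * Real.log 2 + (1 + Real.log (Real.log 2))
        ≤ Real.log A - Real.log Γ := by nlinarith [key, hlogq]
    have heq : Real.log v / Real.log 2 - v * q + (1 + Real.log (Real.log 2)) / Real.log 2
        = (Real.log v - v * q * Real.log 2 + (1 + Real.log (Real.log 2))) / Real.log 2 := by
      field_simp
    rw [heq]
    gcongr
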